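/- Let k ≥ 4. For every ξ ∈ V₁ one has ‖𝒫₁(ξ)‖² = ((k−1)/(k+2))·‖𝒞(ξ)‖², and for every ξ ∈ V₂ one has ‖𝒫₂(ξ)‖² = (2(k−2)/k)·‖𝒞(ξ)‖². -/
import Mathlib


open scoped BigOperators ComplexConjugate ENNReal
open MeasureTheory

set_option maxHeartbeats 1000000

noncomputable section

/-- The index set `{1,2,3,4}` of spinor indices. -/
abbrev Idx := Fin 4

/-- Tensors with `q` (antisymmetric) superscripts and `p` (symmetric) subscripts,
each index ranging over `{1,2,3,4}`. -/
abbrev Tens (q p : ℕ) := (Fin q → Idx) → (Fin p → Idx) → ℂ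

/-- Symmetry in the subscripts. -/
def SymSub {q p : ℕ} (f : Tens q p) : Prop :=
  ∀ (A : Fin q → Idx) (σ : Equiv.Perm (Fin p)) (B : Fin p → Idx), f A (B ∘ σ) = f A B

/-- Antisymmetry in the superscripts. -/
def AntiSup {q p : ℕ} (f : Tens q p) : Prop :=
  ∀ (σ : Equiv.Perm (Fin q)) (A : Fin q → Idx) (B : Fin p → Idx),
    f (A ∘ σ) B = ((Equiv.Perm.sign σ : ℤ) : ℂ) * f A B

/-- Membership in `V_l = ⊙^p ℂ⁴ ⊗ ∧^q ℂ⁴`: symmetric in subscripts, antisymmetric in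
superscripts. -/
def IsMixed {q p : ℕ} (f : Tens q p) : Prop := AntiSup f ∧ SymSub f

/-- Symmetrization `ξ_{(B₁…B_t)}` of a `t`-index tensor. -/
def symmetrize {t : ℕ} (ξ : (Fin t → Idx) → ℂ) : (Fin t → Idx) → ℂ :=
  fun B => ((t.factorial : ℂ))⁻¹ * ∑ σ : Equiv.Perm (Fin t), ξ (B ∘ σ)

/-- Antisymmetrization `ξ_{[B₁…B_t]}` of a `t`-index tensor. -/
def antisymmetrize {t : ℕ} (ξ : (Fin t → Idx) → ℂ) : (Fin t → Idx) → ℂ :=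
  fun B => ((t.factorial : ℂ))⁻¹ * ∑ σ : Equiv.Perm (Fin t),
    ((Equiv.Perm.sign σ : ℤ) : ℂ) * ξ (B ∘ σ)

/-- The contraction `𝒞(f)^{A₁…A_{q}}_{B₁…B_{p}} = Σ_C f^{C A₁…A_q}_{B₁…B_p C}`. -/
def contr {q p : ℕ} (f : Tens (q+1) (p+1)) : Tens q p :=
  fun A B => ∑ C : Idx, f (Fin.cons C A) (Fin.snoc B C)

/-- The Hermitian inner product on tensors, induced from `⊗^k ℂ⁴`. -/
def tinner {q p : ℕ} (f h : Tens q p) : ℂ :=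
  ∑ A : Fin q → Idx, ∑ B : Fin p → Idx, f A B * conj (h A B)

/-- The squared norm of a tensor. -/
def tnormSq {q p : ℕ} (f : Tens q p) : ℝ :=
  ∑ A : Fin q → Idx, ∑ B : Fin p → Idx, Complex.normSq (f A B)
/-- The Kronecker delta `δ^A_B`. -/
def kdelta (A B : Idx) : ℂ := if A = B then 1 else 0

/-- The map `𝒫₁ : V₁ → V₁`,
`𝒫₁(f)^A_{B₁…B_{k−1}} = ((k−1)/(k+2)) · δ^A_{(B₁} 𝒞(f)_{B₂…B_{k−1})}`. -/
def P1 (k : ℕ) {p : ℕ} (f : Tens 1 (p+1)) : Tens 1 (p+1) :=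
  fun A B => (((k : ℂ) - 1) / ((k : ℂ) + 2)) *
    symmetrize (fun B' => kdelta (A 0) (B' 0) * contr f ![] (Fin.tail B')) B

/-- The map `𝒫₂ : V₂ → V₂`,
`𝒫₂(f)^{A₁A₂}_{B₁…B_{k−2}} = (2(k−2)/k) · δ^{[A₁}_{(B₁} 𝒞(f)^{A₂]}_{B₂…B_{k−2})}`. -/
def P2 (k : ℕ) {p : ℕ} (f : Tens 2 (p+1)) : Tens 2 (p+1) :=
  fun A B => (2 * ((k : ℂ) - 2) / (k : ℂ)) *
    antisymmetrize (fun A' =>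
      symmetrize (fun B' => kdelta (A' 0) (B' 0) * contr f ![A' 1] (Fin.tail B')) B) A

open Equiv Function

/-! ### kdelta lemmas -/

lemma kdelta_conj (a b : Idx) : conj (kdelta a b) = kdelta a b := by
  unfold kdelta; split <;> simp

lemma kdelta_sq (a b : Idx) : kdelta a b * kdelta a b = kdelta a b := by
  unfold kdelta; split <;> simp

lemma sum_kdelta (x : Idx) : ∑ a : Idx, kdelta a x = 1 := by
  unfold kdelta; simp

lemma sum_kdelta_mul (x y : Idx) (f : Idx → ℂ) :
    ∑ a : Idx, kdelta a x * (kdelta a y * f a) = kdelta x y * f x := by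
  unfold kdelta
  rw [Finset.sum_eq_single x]
  · simp
  · intro b _ hb; simp [if_neg hb]
  · simp

lemma kdelta_mul_congr {x y : Idx} {f g : ℂ} (h : x = y → f = g) :
    kdelta x y * f = kdelta x y * g := by
  unfold kdelta; split
  · rw [h ‹x = y›]
  · simp

/-! ### permutation from equal ranges -/

lemma exists_perm_of_range_eq {n N : ℕ} {f g : Fin n → Fin N}
    (hf : Injective f) (hg : Injective g) (h : Set.range f = Set.range g) :
    ∃ τ : Equiv.Perm (Fin n), ∀ x, f x = g (τ x) := by
  refine ⟨(Equiv.ofInjective f hf).trans ((Equiv.setCongr h).trans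
    (Equiv.ofInjective g hg).symm), fun x => ?_⟩
  simp only [Equiv.trans_apply]
  rw [Equiv.apply_ofInjective_symm hg]
  rfl

/-- Invariance of a function of tuples under permutation of the arguments. -/
def Symm {n : ℕ} (η : (Fin n → Idx) → ℂ) : Prop :=
  ∀ (σ : Equiv.Perm (Fin n)) (B : Fin n → Idx), η (B ∘ σ) = η B

lemma Symm.comp_eq {n N : ℕ} {η : (Fin n → Idx) → ℂ} (hη : Symm η)
    {f g : Fin n → Fin N} (hf : Injective f) (hg : Injective g)
    (h : Set.range f = Set.range g) (B : Fin N → Idx) :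
    η (B ∘ f) = η (B ∘ g) := by
  obtain ⟨τ, hτ⟩ := exists_perm_of_range_eq hf hg h
  have : B ∘ f = (B ∘ g) ∘ τ := by funext x; simp [hτ x]
  rw [this, hη]

/-! ### extending a permutation by fixing the last index -/

def extendLast {n : ℕ} (σ : Equiv.Perm (Fin n)) : Equiv.Perm (Fin (n+1)) where
  toFun := Fin.snoc (fun i => (σ i).castSucc) (Fin.last n)
  invFun := Fin.snoc (fun i => (σ.symm i).castSucc) (Fin.last n)
  left_inv := by
    intro x
    refine Fin.lastCases ?_ (fun i => ?_) x <;> simp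
  right_inv := by
    intro x
    refine Fin.lastCases ?_ (fun i => ?_) x <;> simp

lemma snoc_comp_extendLast {n : ℕ} (σ : Equiv.Perm (Fin n)) (B : Fin n → Idx) (C : Idx) :
    (Fin.snoc B C : Fin (n+1) → Idx) ∘ (extendLast σ) = Fin.snoc (B ∘ σ) C := by
  funext x
  refine Fin.lastCases ?_ (fun i => ?_) x <;> simp [extendLast]

/-! ### closed form for the symmetrized delta-tensor -/

lemma comp_succ_range {n : ℕ} (σ : Equiv.Perm (Fin (n+1))) :
    Set.range (⇑σ ∘ Fin.succ) = ({σ 0}ᶜ : Set (Fin (n+1))) := by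
  have h : ⇑σ '' ({0}ᶜ : Set (Fin (n+1))) = ({σ 0}ᶜ : Set (Fin (n+1))) := by
    rw [Set.image_compl_eq σ.bijective, Set.image_singleton]
  rw [Set.range_comp, Fin.range_succ, h]

lemma symmetrize_delta {n : ℕ} {η : (Fin n → Idx) → ℂ} (hη : Symm η)
    (a : Idx) (B : Fin (n+1) → Idx) :
    symmetrize (fun B' => kdelta a (B' 0) * η (Fin.tail B')) B
      = (((n:ℂ)+1))⁻¹ * ∑ i : Fin (n+1), kdelta a (B i) * η (B ∘ i.succAbove) := by
  unfold symmetrize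
  have hterm : ∀ σ : Equiv.Perm (Fin (n+1)),
      kdelta a ((B ∘ σ) 0) * η (Fin.tail (B ∘ σ))
        = kdelta a (B (σ 0)) * η (B ∘ (σ 0).succAbove) := by
    intro σ
    congr 1
    have h1 : Fin.tail (B ∘ σ) = B ∘ (⇑σ ∘ Fin.succ) := rfl
    rw [h1]
    exact hη.comp_eq (σ.injective.comp (Fin.succ_injective n))
      (Fin.succAbove_right_injective)
      (by rw [comp_succ_range, Fin.range_succAbove]) B
  rw [Finset.sum_congr rfl (fun σ _ => hterm σ)]
  have h2 : ∑ σ : Equiv.Perm (Fin (n+1)), kdelta a (B (σ 0)) * η (B ∘ (σ 0).succAbove)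
      = (Nat.factorial n : ℂ) * ∑ i : Fin (n+1), kdelta a (B i) * η (B ∘ i.succAbove) := by
    rw [← Fintype.sum_equiv (Equiv.Perm.decomposeFin).symm _
      (fun σ => kdelta a (B (σ 0)) * η (B ∘ (σ 0).succAbove)) (fun pe => rfl)]
    rw [Fintype.sum_prod_type]
    simp only [Equiv.Perm.decomposeFin_symm_apply_zero, Finset.sum_const,
      Finset.card_univ, Fintype.card_perm, Fintype.card_fin, nsmul_eq_mul]
    rw [Finset.mul_sum]
  rw [h2, ← mul_assoc]
  congr 1
  have hfac : (Nat.factorial (n+1) : ℂ) = ((n:ℂ)+1) * (Nat.factorial n : ℂ) := by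
    push_cast [Nat.factorial_succ]; ring
  have h3 : ((n:ℂ)+1) ≠ 0 := Nat.cast_add_one_ne_zero n
  have h4 : (Nat.factorial n : ℂ) ≠ 0 := Nat.cast_ne_zero.2 (Nat.factorial_ne_zero n)
  rw [hfac, mul_inv, mul_assoc, inv_mul_cancel₀ h4, mul_one]

/-! ### properties of the contraction -/

lemma symm_contr {q n : ℕ} {ξ : Tens (q+1) (n+1)} (hξ : SymSub ξ) (A : Fin q → Idx) :
    Symm (fun B => contr ξ A B) := by
  intro σ B
  unfold contr
  refine Finset.sum_congr rfl (fun C _ => ?_)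
  rw [← snoc_comp_extendLast σ B C, hξ]

lemma sum_fun0 (F : (Fin 0 → Idx) → ℂ) : ∑ A : Fin 0 → Idx, F A = F ![] :=
  Fintype.sum_subsingleton F ![]

lemma sum_fun1 (F : Idx → ℂ) : ∑ A : Fin 1 → Idx, F (A 0) = ∑ a : Idx, F a := by
  rw [← Fintype.sum_equiv (Equiv.funUnique (Fin 1) Idx).symm _ (fun A => F (A 0))
    (fun a => rfl)]
  rfl

lemma sum_fun2 (F : Idx → Idx → ℂ) :
    ∑ A : Fin 2 → Idx, F (A 0) (A 1) = ∑ a : Idx, ∑ b : Idx, F a b := by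
  rw [← Fintype.sum_equiv (piFinTwoEquiv (fun _ => Idx)).symm _ (fun A => F (A 0) (A 1))
    (fun p => rfl), Fintype.sum_prod_type]
  rfl

lemma sum_insertNth {n : ℕ} (i : Fin (n+1)) (F : (Fin (n+1) → Idx) → ℂ) :
    ∑ B : Fin (n+1) → Idx, F B
      = ∑ x : Idx, ∑ B' : Fin n → Idx, F (Fin.insertNth i x B') := by
  rw [← Fintype.sum_equiv (Fin.insertNthEquiv (fun _ => Idx) i) _ F (fun p => rfl),
    Fintype.sum_prod_type]
  rfl

/-! ### rearrangement lemmas for symmetric functions -/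

lemma equiv_comp_range {n N : ℕ} (e : Equiv.Perm (Fin N)) (f : Fin n → Fin N) :
    Set.range (⇑e ∘ f) = ⇑e '' Set.range f := Set.range_comp _ _

lemma cons_injective {n N : ℕ} {a : Fin N} {f : Fin n → Fin N}
    (hf : Function.Injective f) (ha : ∀ x, f x ≠ a) :
    Function.Injective (Fin.cons a f : Fin (n+1) → Fin N) := by
  intro x y hxy
  induction x using Fin.cases with
  | zero =>
    induction y using Fin.cases with
    | zero => rfl
    | succ y' =>
      rw [Fin.cons_zero, Fin.cons_succ] at hxy
      exact absurd hxy.symm (ha y')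
  | succ x' =>
    induction y using Fin.cases with
    | zero =>
      rw [Fin.cons_succ, Fin.cons_zero] at hxy
      exact absurd hxy (ha x')
    | succ y' =>
      rw [Fin.cons_succ, Fin.cons_succ] at hxy
      rw [hf hxy]

lemma cons_range {n N : ℕ} (a : Fin N) (f : Fin n → Fin N) :
    Set.range (Fin.cons a f : Fin (n+1) → Fin N) = {a} ∪ Set.range f := by
  ext z
  constructor
  · rintro ⟨y, rfl⟩
    induction y using Fin.cases with
    | zero => left; simp
    | succ y' => right; exact ⟨y', by simp⟩
  · rintro (rfl | ⟨y, rfl⟩)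
    · exact ⟨0, rfl⟩
    · exact ⟨y.succ, by simp⟩

lemma eta_swap {n : ℕ} {η : (Fin n → Idx) → ℂ} (hη : Symm η) {i j : Fin (n+1)}
    (hij : i ≠ j) (B : Fin (n+1) → Idx) (hB : B i = B j) :
    η (B ∘ j.succAbove) = η (B ∘ i.succAbove) := by
  have hswap : B ∘ ⇑(Equiv.swap i j) = B := by
    funext x
    rcases eq_or_ne x i with rfl | hxi
    · simp [Equiv.swap_apply_left, hB]
    rcases eq_or_ne x j with rfl | hxj
    · simp [Equiv.swap_apply_right, hB]
    · simp [Equiv.swap_apply_of_ne_of_ne hxi hxj]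
  have h1 : B ∘ j.succAbove = B ∘ (⇑(Equiv.swap i j) ∘ j.succAbove) := by
    rw [← Function.comp_assoc, hswap]
  rw [h1]
  refine hη.comp_eq ((Equiv.swap i j).injective.comp (Fin.succAbove_right_injective))
    Fin.succAbove_right_injective ?_ B
  rw [equiv_comp_range, Fin.range_succAbove, Fin.range_succAbove,
    Set.image_compl_eq (Equiv.swap i j).bijective, Set.image_singleton,
    Equiv.swap_apply_right]

/-- Pulling out the `j₀`-th entry of a symmetric function's argument. -/
lemma eta_pull {n : ℕ} {η : (Fin (n+1) → Idx) → ℂ} (hη : Symm η) (j₀ : Fin (n+1))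
    (B' : Fin (n+1) → Idx) :
    η B' = η (Fin.cons (B' j₀) (B' ∘ j₀.succAbove)) := by
  have hg : Fin.cons (B' j₀) (B' ∘ j₀.succAbove) = B' ∘ (Fin.cons j₀ j₀.succAbove) := by
    funext x
    refine Fin.cases ?_ (fun y => ?_) x <;> simp
  rw [hg]
  refine hη.comp_eq Function.injective_id
    (cons_injective Fin.succAbove_right_injective (fun x => Fin.succAbove_ne j₀ x)) ?_ B'
  rw [Set.range_id, cons_range, Fin.range_succAbove]
  simp

/-- Removing the `j`-th entry of `B = insertNth i x B'` (with `j = i.succAbove j₀`):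
the result is, up to rearrangement, `x` followed by `B'` with its `j₀`-th entry removed. -/
lemma eta_remove {n : ℕ} {η : (Fin (n+1) → Idx) → ℂ} (hη : Symm η)
    (i : Fin (n+2)) (j₀ : Fin (n+1)) (x : Idx) (B' : Fin (n+1) → Idx) :
    η ((Fin.insertNth (α := fun _ => Idx) i x B') ∘ (i.succAbove j₀).succAbove)
      = η (Fin.cons x (B' ∘ j₀.succAbove)) := by
  set B := Fin.insertNth (α := fun _ => Idx) i x B' with hBdef
  have hu : Fin.cons x (B' ∘ j₀.succAbove)
      = B ∘ (Fin.cons i (i.succAbove ∘ j₀.succAbove) : Fin (n+1) → Fin (n+2)) := by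
    funext z
    refine Fin.cases ?_ (fun y => ?_) z
    · simp [hBdef, Fin.insertNth_apply_same]
    · simp [hBdef, Function.comp, Fin.insertNth_apply_succAbove]
  rw [hu]
  refine hη.comp_eq Fin.succAbove_right_injective
    (cons_injective (Fin.succAbove_right_injective.comp Fin.succAbove_right_injective)
      (fun y => Fin.succAbove_ne i (j₀.succAbove y))) ?_ B
  rw [Fin.range_succAbove, cons_range, Set.range_comp, Fin.range_succAbove]
  ext z
  simp only [Set.mem_union, Set.mem_singleton_iff, Set.mem_image, Set.mem_compl_iff]
  constructor
  · intro hz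
    rcases eq_or_ne z i with rfl | hzi
    · exact Or.inl rfl
    · obtain ⟨y, hy⟩ := Fin.exists_succAbove_eq hzi
      refine Or.inr ⟨y, fun h => hz ?_, hy⟩
      rw [← hy, h]
  · rintro (rfl | ⟨y, hy, rfl⟩)
    · exact fun h => Fin.succAbove_ne z j₀ h.symm
    · exact fun h => hy (Fin.succAbove_right_injective h)

/-! ### trace-freeness of the contraction of a `V₂`-tensor -/

lemma tracefree {n : ℕ} {ξ : Tens 2 (n+2)} (hA : AntiSup ξ) (hS : SymSub ξ)
    (rest : Fin n → Idx) :
    ∑ a : Idx, contr ξ ![a] (Fin.cons a rest) = 0 := by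
  have hswapA : ∀ (C a : Idx) (X : Fin (n+2) → Idx),
      ξ ![C, a] X = -(ξ ![a, C] X) := by
    intro C a X
    have h : (![C, a] : Fin 2 → Idx) = ![a, C] ∘ (Equiv.swap (0 : Fin 2) 1) := by
      funext i
      fin_cases i <;> simp [Equiv.swap_apply_left, Equiv.swap_apply_right]
    rw [h, hA]
    rw [Equiv.Perm.sign_swap (by decide)]
    simp
  have hswapB : ∀ (a C : Idx),
      (Fin.snoc (Fin.cons a rest) C : Fin (n+2) → Idx)
        = (Fin.snoc (Fin.cons C rest) a : Fin (n+2) → Idx)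
          ∘ (Equiv.swap (0 : Fin (n+2)) (Fin.last (n+1))) := by
    intro a C
    funext x
    rcases eq_or_ne x 0 with rfl | hx0
    · have l1 : (Fin.snoc (Fin.cons a rest) C : Fin (n+2) → Idx) 0 = a := by
        rw [show ((0 : Fin (n+2))) = Fin.castSucc 0 from rfl, Fin.snoc_castSucc, Fin.cons_zero]
      rw [l1, Function.comp_apply, Equiv.swap_apply_left, Fin.snoc_last]
    rcases eq_or_ne x (Fin.last (n+1)) with rfl | hxl
    · have l1 : (Fin.snoc (Fin.cons C rest) a : Fin (n+2) → Idx) 0 = C := by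
        rw [show ((0 : Fin (n+2))) = Fin.castSucc 0 from rfl, Fin.snoc_castSucc, Fin.cons_zero]
      rw [Function.comp_apply, Equiv.swap_apply_right, l1, Fin.snoc_last]
    · have hfix : (Equiv.swap (0 : Fin (n+2)) (Fin.last (n+1))) x = x :=
        Equiv.swap_apply_of_ne_of_ne hx0 hxl
      obtain ⟨y, rfl⟩ := Fin.exists_castSucc_eq.2 hxl
      have hy0 : y ≠ 0 := by
        intro h; exact hx0 (by rw [h]; rfl)
      obtain ⟨y', rfl⟩ := Fin.exists_succ_eq.2 hy0
      simp only [Function.comp_apply, hfix, Fin.snoc_castSucc, Fin.cons_succ]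
  set F : Idx → Idx → ℂ := fun a C => ξ (Fin.cons C ![a]) (Fin.snoc (Fin.cons a rest) C)
    with hF
  have hgoal : ∑ a : Idx, contr ξ ![a] (Fin.cons a rest) = ∑ a : Idx, ∑ C : Idx, F a C := rfl
  rw [hgoal]
  have key : ∀ a C, F a C = -(F C a) := by
    intro a C
    have h1 : F a C = ξ ![C, a] (Fin.snoc (Fin.cons a rest) C) := rfl
    rw [h1, hswapB a C, hS, hswapA]
    rfl
  have h2 : ∑ a : Idx, ∑ C : Idx, F a C = -∑ a : Idx, ∑ C : Idx, F C a := by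
    rw [← Finset.sum_neg_distrib]
    refine Finset.sum_congr rfl (fun a _ => ?_)
    rw [← Finset.sum_neg_distrib]
    exact Finset.sum_congr rfl (fun C _ => key a C)
  rw [Finset.sum_comm (f := fun a C => F C a)] at h2
  linear_combination h2 / 2

/-! ### assorted small helpers -/

lemma kdelta_self (x : Idx) : kdelta x x = 1 := if_pos rfl

lemma sum_kdelta_apply (x : Idx) (f : Idx → ℂ) : ∑ a : Idx, kdelta a x * f a = f x := by
  unfold kdelta
  rw [Finset.sum_eq_single x]
  · simp
  · intro b _ hb; simp [if_neg hb]
  · simp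

lemma tnormSq_eq {q p : ℕ} (f : Tens q p) :
    ((tnormSq f : ℝ) : ℂ) = ∑ A, ∑ B, f A B * conj (f A B) := by
  unfold tnormSq
  push_cast
  exact Finset.sum_congr rfl (fun A _ => Finset.sum_congr rfl
    (fun B _ => (Complex.mul_conj _).symm))

lemma comp_insertNth {n : ℕ} (i : Fin (n+1)) (x : Idx) (B' : Fin n → Idx) :
    (Fin.insertNth (α := fun _ => Idx) i x B') ∘ i.succAbove = B' := by
  funext j
  exact Fin.insertNth_apply_succAbove (α := fun _ => Idx) i x B' j

lemma sum_swap4 {ι₁ ι₂ ι₃ ι₄ : Type*} [Fintype ι₁] [Fintype ι₂] [Fintype ι₃] [Fintype ι₄]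
    (f : ι₁ → ι₂ → ι₃ → ι₄ → ℂ) :
    ∑ a, ∑ b, ∑ c, ∑ d, f a b c d = ∑ c, ∑ d, ∑ a, ∑ b, f a b c d := by
  have h1 : ∑ a, ∑ b, ∑ c, ∑ d, f a b c d = ∑ a, ∑ c, ∑ b, ∑ d, f a b c d :=
    Finset.sum_congr rfl (fun a _ => Finset.sum_comm)
  have h2 : ∑ a, ∑ c, ∑ b, ∑ d, f a b c d = ∑ c, ∑ a, ∑ b, ∑ d, f a b c d :=
    Finset.sum_comm
  have h3 : ∑ c, ∑ a, ∑ b, ∑ d, f a b c d = ∑ c, ∑ a, ∑ d, ∑ b, f a b c d :=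
    Finset.sum_congr rfl (fun c _ => Finset.sum_congr rfl (fun a _ => Finset.sum_comm))
  have h4 : ∑ c, ∑ a, ∑ d, ∑ b, f a b c d = ∑ c, ∑ d, ∑ a, ∑ b, f a b c d :=
    Finset.sum_congr rfl (fun c _ => Finset.sum_comm)
  rw [h1, h2, h3, h4]

lemma sum_ite4 {n : ℕ} (u v : ℂ) :
    ∑ i : Fin n, ∑ j : Fin n, (if i = j then u else v)
      = (n : ℂ) * ((n : ℂ) - 1) * v + (n : ℂ) * u := by
  have h : ∀ i : Fin n, ∑ j : Fin n, (if i = j then u else v)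
      = ((n : ℂ) - 1) * v + u := by
    intro i
    have h1 : ∀ j : Fin n, (if i = j then u else v) = v + (if i = j then u - v else 0) := by
      intro j; split <;> ring
    rw [Finset.sum_congr rfl (fun j _ => h1 j), Finset.sum_add_distrib, Finset.sum_ite_eq]
    simp [Finset.card_univ]
    ring
  rw [Finset.sum_congr rfl (fun i _ => h i)]
  simp [Finset.card_univ, mul_add]
  ring

/-! ### Part 1 -/

lemma part1 (k m : ℕ) (hk : k = m + 4) (ξ : Tens 1 (m+3)) (hξ : IsMixed ξ) :
    tnormSq (P1 k ξ) = (((k : ℝ) - 1) / ((k : ℝ) + 2)) * tnormSq (contr ξ) := by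
  obtain ⟨hAs, hSs⟩ := hξ
  set η : (Fin (m+2) → Idx) → ℂ := fun B => contr ξ ![] B with hηdef
  have hη : Symm η := symm_contr hSs ![]
  set c : ℂ := ((k:ℂ) - 1) / ((k:ℂ) + 2) with hcdef
  set t : ℂ := ((m+2 : ℕ) : ℂ) + 1 with htdef
  set N : ℂ := ∑ B' : Fin (m+2) → Idx, η B' * conj (η B') with hNdef
  -- closed form for P1
  have hform : ∀ (A : Fin 1 → Idx) (B : Fin (m+3) → Idx),
      P1 k ξ A B = (c * t⁻¹) * ∑ i : Fin (m+3), kdelta (A 0) (B i) * η (B ∘ i.succAbove) := by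
    intro A B
    show c * symmetrize (fun B' => kdelta (A 0) (B' 0) * η (Fin.tail B')) B = _
    rw [symmetrize_delta hη (A 0) B, ← htdef, mul_assoc]
  -- the key sums
  have key : ∀ i j : Fin (m+3),
      (∑ A : Fin 1 → Idx, ∑ B : Fin (m+3) → Idx,
        (kdelta (A 0) (B i) * η (B ∘ i.succAbove))
          * conj (kdelta (A 0) (B j) * η (B ∘ j.succAbove)))
      = (if i = j then 4 else 1) * N := by
    intro i j
    have hpt : ∀ (a : Idx) (B : Fin (m+3) → Idx),
        (kdelta a (B i) * η (B ∘ i.succAbove)) * conj (kdelta a (B j) * η (B ∘ j.succAbove))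
          = kdelta a (B i) * (kdelta a (B j)
              * (η (B ∘ i.succAbove) * conj (η (B ∘ j.succAbove)))) := by
      intro a B; rw [map_mul, kdelta_conj]; ring
    have step1 : (∑ A : Fin 1 → Idx, ∑ B : Fin (m+3) → Idx,
        (kdelta (A 0) (B i) * η (B ∘ i.succAbove))
          * conj (kdelta (A 0) (B j) * η (B ∘ j.succAbove)))
        = ∑ a : Idx, ∑ B : Fin (m+3) → Idx,
            (kdelta a (B i) * η (B ∘ i.succAbove))
              * conj (kdelta a (B j) * η (B ∘ j.succAbove)) :=
      sum_fun1 (fun a => ∑ B : Fin (m+3) → Idx,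
        (kdelta a (B i) * η (B ∘ i.succAbove)) * conj (kdelta a (B j) * η (B ∘ j.succAbove)))
    have step2 : (∑ a : Idx, ∑ B : Fin (m+3) → Idx,
        (kdelta a (B i) * η (B ∘ i.succAbove)) * conj (kdelta a (B j) * η (B ∘ j.succAbove)))
        = ∑ B : Fin (m+3) → Idx,
            kdelta (B i) (B j) * (η (B ∘ i.succAbove) * conj (η (B ∘ j.succAbove))) := by
      rw [Finset.sum_comm]
      refine Finset.sum_congr rfl (fun B _ => ?_)
      rw [Finset.sum_congr rfl (fun a _ => hpt a B)]
      exact sum_kdelta_mul (B i) (B j) _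
    have step3 : (∑ B : Fin (m+3) → Idx,
        kdelta (B i) (B j) * (η (B ∘ i.succAbove) * conj (η (B ∘ j.succAbove))))
        = ∑ x : Idx, ∑ B' : Fin (m+2) → Idx,
            kdelta ((Fin.insertNth (α := fun _ => Idx) i x B') i)
                ((Fin.insertNth (α := fun _ => Idx) i x B') j)
              * (η ((Fin.insertNth (α := fun _ => Idx) i x B') ∘ i.succAbove)
                  * conj (η ((Fin.insertNth (α := fun _ => Idx) i x B') ∘ j.succAbove))) :=
      sum_insertNth i _
    rw [step1, step2, step3]
    rcases eq_or_ne i j with rfl | hij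
    · have hpt2 : ∀ (x : Idx) (B' : Fin (m+2) → Idx),
          kdelta ((Fin.insertNth (α := fun _ => Idx) i x B') i)
              ((Fin.insertNth (α := fun _ => Idx) i x B') i)
            * (η ((Fin.insertNth (α := fun _ => Idx) i x B') ∘ i.succAbove)
                * conj (η ((Fin.insertNth (α := fun _ => Idx) i x B') ∘ i.succAbove)))
            = η B' * conj (η B') := by
        intro x B'
        rw [kdelta_self, comp_insertNth, one_mul]
      rw [Finset.sum_congr rfl (fun x _ => Finset.sum_congr rfl (fun B' _ => hpt2 x B'))]
      rw [Finset.sum_const, Finset.card_univ, if_pos rfl]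
      show (4 : ℕ) • N = 4 * N
      rw [nsmul_eq_mul]
      norm_num
    · obtain ⟨j₀, hj₀⟩ := Fin.exists_succAbove_eq (Ne.symm hij)
      have hpt2 : ∀ (x : Idx) (B' : Fin (m+2) → Idx),
          kdelta ((Fin.insertNth (α := fun _ => Idx) i x B') i)
              ((Fin.insertNth (α := fun _ => Idx) i x B') j)
            * (η ((Fin.insertNth (α := fun _ => Idx) i x B') ∘ i.succAbove)
                * conj (η ((Fin.insertNth (α := fun _ => Idx) i x B') ∘ j.succAbove)))
            = kdelta x (B' j₀) * (η B' * conj (η B')) := by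
        intro x B'
        have h1 : (Fin.insertNth (α := fun _ => Idx) i x B') i = x :=
          Fin.insertNth_apply_same (α := fun _ => Idx) i x B'
        have h2 : (Fin.insertNth (α := fun _ => Idx) i x B') j = B' j₀ := by
          rw [← hj₀]
          exact Fin.insertNth_apply_succAbove (α := fun _ => Idx) i x B' j₀
        rw [h1, h2]
        refine kdelta_mul_congr (fun hxy => ?_)
        rw [comp_insertNth]
        have hB : (Fin.insertNth (α := fun _ => Idx) i x B') i
            = (Fin.insertNth (α := fun _ => Idx) i x B') j := by rw [h1, h2, hxy]
        rw [eta_swap hη hij _ hB, comp_insertNth]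
      rw [Finset.sum_congr rfl (fun x _ => Finset.sum_congr rfl (fun B' _ => hpt2 x B'))]
      rw [Finset.sum_comm, if_neg hij, one_mul, hNdef]
      refine Finset.sum_congr rfl (fun B' _ => ?_)
      rw [← Finset.sum_mul, sum_kdelta (B' j₀), one_mul]
  -- assemble the complex identity
  have expand : ∀ (A : Fin 1 → Idx) (B : Fin (m+3) → Idx),
      P1 k ξ A B * conj (P1 k ξ A B)
        = (c * t⁻¹) * conj (c * t⁻¹)
            * ∑ i : Fin (m+3), ∑ j : Fin (m+3),
                (kdelta (A 0) (B i) * η (B ∘ i.succAbove))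
                  * conj (kdelta (A 0) (B j) * η (B ∘ j.succAbove)) := by
    intro A B
    rw [hform A B, map_mul, map_sum]
    rw [show ∀ (K K' S S' : ℂ), (K * S) * (K' * S') = (K * K') * (S * S') from
      fun K K' S S' => by ring]
    rw [Finset.sum_mul_sum]
  have HC : (∑ A : Fin 1 → Idx, ∑ B : Fin (m+3) → Idx, P1 k ξ A B * conj (P1 k ξ A B))
      = (c * t⁻¹) * conj (c * t⁻¹)
          * ((((m+3 : ℕ) : ℂ) * (((m+3 : ℕ) : ℂ) - 1) * 1 + ((m+3 : ℕ) : ℂ) * 4) * N) := by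
    rw [Finset.sum_congr rfl (fun A _ => Finset.sum_congr rfl (fun B _ => expand A B))]
    have pull : (∑ A : Fin 1 → Idx, ∑ B : Fin (m+3) → Idx,
        (c * t⁻¹) * conj (c * t⁻¹)
          * ∑ i : Fin (m+3), ∑ j : Fin (m+3),
              (kdelta (A 0) (B i) * η (B ∘ i.succAbove))
                * conj (kdelta (A 0) (B j) * η (B ∘ j.succAbove)))
        = (c * t⁻¹) * conj (c * t⁻¹)
            * ∑ A : Fin 1 → Idx, ∑ B : Fin (m+3) → Idx,
                ∑ i : Fin (m+3), ∑ j : Fin (m+3),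
                  (kdelta (A 0) (B i) * η (B ∘ i.succAbove))
                    * conj (kdelta (A 0) (B j) * η (B ∘ j.succAbove)) := by
      rw [Finset.mul_sum]
      refine Finset.sum_congr rfl (fun A _ => ?_)
      rw [Finset.mul_sum]
    rw [pull, sum_swap4]
    congr 1
    rw [Finset.sum_congr rfl (fun i _ => Finset.sum_congr rfl (fun j _ => key i j)),
      Finset.sum_congr rfl (fun i (_ : i ∈ Finset.univ) => (Finset.sum_mul _ _ _).symm),
      ← Finset.sum_mul, sum_ite4]
  -- convert to the real statement
  have hNr : ((tnormSq (contr ξ) : ℝ) : ℂ) = N := by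
    rw [tnormSq_eq]
    rw [hNdef]
    exact Fintype.sum_subsingleton _ ![]
  have hPr : ((tnormSq (P1 k ξ) : ℝ) : ℂ)
      = (∑ A, ∑ B, P1 k ξ A B * conj (P1 k ξ A B)) := tnormSq_eq _
  have hconj : conj c = c := by
    simp [hcdef, map_div₀, map_sub, map_add, Complex.conj_natCast, Complex.conj_ofNat]
  have harith : (c * t⁻¹) * conj (c * t⁻¹)
      * ((((m+3 : ℕ) : ℂ) * (((m+3 : ℕ) : ℂ) - 1) * 1 + ((m+3 : ℕ) : ℂ) * 4))
      = ((((k : ℝ) - 1) / ((k : ℝ) + 2) : ℝ) : ℂ) := by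
    rw [map_mul, hconj, map_inv₀, htdef, hcdef]
    have hconjt : conj (((m+2 : ℕ) : ℂ) + 1) = ((m+2 : ℕ) : ℂ) + 1 := by
      rw [map_add, map_one, Complex.conj_natCast]
    rw [hconjt]
    subst hk
    push_cast
    have h3 : ((m:ℂ)+3) ≠ 0 := by
      intro h
      have := congrArg Complex.re h
      simp at this
      linarith [this]
    have h6 : ((m:ℂ)+6) ≠ 0 := by
      intro h
      have := congrArg Complex.re h
      simp at this
      linarith [this]
    have h3' : ((m:ℂ)+2+1) ≠ 0 := by
      rw [show ((m:ℂ)+2+1) = (m:ℂ)+3 from by ring]; exact h3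
    have h6' : ((m:ℂ)+4+2) ≠ 0 := by
      rw [show ((m:ℂ)+4+2) = (m:ℂ)+6 from by ring]; exact h6
    field_simp
    ring
  have final : ((tnormSq (P1 k ξ) : ℝ) : ℂ)
      = (((((k : ℝ) - 1) / ((k : ℝ) + 2)) * tnormSq (contr ξ) : ℝ) : ℂ) := by
    rw [hPr, HC, ← mul_assoc, harith]
    push_cast
    rw [hNr]
  exact_mod_cast final

/-! ### helpers for part 2 -/

lemma antisymmetrize_two (g : (Fin 2 → Idx) → ℂ) (A : Fin 2 → Idx) :
    antisymmetrize g A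
      = (2:ℂ)⁻¹ * (g A - g (A ∘ ⇑(Equiv.swap (0:Fin 2) 1))) := by
  unfold antisymmetrize
  have huniv : (Finset.univ : Finset (Equiv.Perm (Fin 2)))
      = {1, Equiv.swap 0 1} := by decide
  rw [huniv, Finset.sum_insert (by decide), Finset.sum_singleton]
  have h1 : A ∘ ⇑(1 : Equiv.Perm (Fin 2)) = A := by
    funext x; rfl
  rw [h1, Equiv.Perm.sign_swap (by decide)]
  show ((Nat.factorial 2 : ℂ))⁻¹ * _ = _
  norm_num
  ring

lemma sum_swap3 {ι₁ ι₂ ι₃ : Type*} [Fintype ι₁] [Fintype ι₂] [Fintype ι₃]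
    (f : ι₁ → ι₂ → ι₃ → ℂ) :
    ∑ a, ∑ b, ∑ c, f a b c = ∑ c, ∑ a, ∑ b, f a b c := by
  have h1 : ∑ a, ∑ b, ∑ c, f a b c = ∑ a, ∑ c, ∑ b, f a b c :=
    Finset.sum_congr rfl (fun a _ => Finset.sum_comm)
  rw [h1]
  exact Finset.sum_comm

lemma sum_kdelta2 (x y : Idx) (f : Idx → Idx → ℂ) :
    ∑ a : Idx, ∑ b : Idx, kdelta a x * (kdelta b y * f a b) = f x y := by
  have h : ∀ a, ∑ b : Idx, kdelta a x * (kdelta b y * f a b)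
      = kdelta a x * f a y := by
    intro a
    rw [← Finset.mul_sum, sum_kdelta_apply y (f a)]
  rw [Finset.sum_congr rfl (fun a _ => h a)]
  exact sum_kdelta_apply x (fun a => f a y)

lemma sum_sub_mul_sub {n : ℕ} (x y u v : Fin n → ℂ) :
    ((∑ i, x i) - ∑ i, y i) * ((∑ j, u j) - ∑ j, v j)
      = ∑ i, ∑ j, ((x i * u j + y i * v j) - (x i * v j + y i * u j)) := by
  rw [← Finset.sum_sub_distrib, ← Finset.sum_sub_distrib, Finset.sum_mul]
  refine Finset.sum_congr rfl (fun i _ => ?_)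
  rw [Finset.mul_sum]
  refine Finset.sum_congr rfl (fun j _ => ?_)
  ring

/-! ### the two key sums for part 2 -/

lemma keyGG {n : ℕ} (η : Idx → (Fin (n+1) → Idx) → ℂ) (hη : ∀ b, Symm (η b))
    (i j : Fin (n+2)) :
    (∑ a : Idx, ∑ b : Idx, ∑ B : Fin (n+2) → Idx,
      (kdelta a (B i) * η b (B ∘ i.succAbove))
        * conj (kdelta a (B j) * η b (B ∘ j.succAbove)))
    = (if i = j then 4 else 1)
        * (∑ b : Idx, ∑ B' : Fin (n+1) → Idx, η b B' * conj (η b B')) := by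
  have hpt : ∀ (a b : Idx) (B : Fin (n+2) → Idx),
      (kdelta a (B i) * η b (B ∘ i.succAbove))
        * conj (kdelta a (B j) * η b (B ∘ j.succAbove))
      = kdelta a (B i) * (kdelta a (B j)
          * (η b (B ∘ i.succAbove) * conj (η b (B ∘ j.succAbove)))) := by
    intro a b B; rw [map_mul, kdelta_conj]; ring
  rw [Finset.sum_congr rfl (fun a _ => Finset.sum_congr rfl (fun b _ =>
    Finset.sum_congr rfl (fun B _ => hpt a b B))), sum_swap3]
  have hper : ∀ B : Fin (n+2) → Idx,
      (∑ a : Idx, ∑ b : Idx, kdelta a (B i) * (kdelta a (B j)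
          * (η b (B ∘ i.succAbove) * conj (η b (B ∘ j.succAbove)))))
      = kdelta (B i) (B j)
          * ∑ b : Idx, η b (B ∘ i.succAbove) * conj (η b (B ∘ j.succAbove)) := by
    intro B
    have h1 : ∀ a : Idx, (∑ b : Idx, kdelta a (B i) * (kdelta a (B j)
        * (η b (B ∘ i.succAbove) * conj (η b (B ∘ j.succAbove)))))
        = kdelta a (B i) * (kdelta a (B j)
            * ∑ b : Idx, η b (B ∘ i.succAbove) * conj (η b (B ∘ j.succAbove))) := by
      intro a; rw [← Finset.mul_sum, ← Finset.mul_sum]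
    rw [Finset.sum_congr rfl (fun a _ => h1 a)]
    exact sum_kdelta_mul (B i) (B j) _
  rw [Finset.sum_congr rfl (fun B _ => hper B), sum_insertNth i]
  rcases eq_or_ne i j with rfl | hij
  · have hpt2 : ∀ (x : Idx) (B' : Fin (n+1) → Idx),
        kdelta ((Fin.insertNth (α := fun _ => Idx) i x B') i)
            ((Fin.insertNth (α := fun _ => Idx) i x B') i)
          * ∑ b : Idx, η b ((Fin.insertNth (α := fun _ => Idx) i x B') ∘ i.succAbove)
              * conj (η b ((Fin.insertNth (α := fun _ => Idx) i x B') ∘ i.succAbove))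
        = ∑ b : Idx, η b B' * conj (η b B') := by
      intro x B'
      rw [kdelta_self, comp_insertNth, one_mul]
    rw [Finset.sum_congr rfl (fun x _ => Finset.sum_congr rfl (fun B' _ => hpt2 x B')),
      if_pos rfl]
    rw [Finset.sum_comm (f := fun (B' : Fin (n+1) → Idx) (b : Idx) => η b B' * conj (η b B'))]
    rw [Finset.sum_const, Finset.card_univ]
    show (4 : ℕ) • _ = 4 * _
    rw [nsmul_eq_mul]
    norm_num
  · obtain ⟨j₀, hj₀⟩ := Fin.exists_succAbove_eq (Ne.symm hij)
    have hpt2 : ∀ (x : Idx) (B' : Fin (n+1) → Idx),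
        kdelta ((Fin.insertNth (α := fun _ => Idx) i x B') i)
            ((Fin.insertNth (α := fun _ => Idx) i x B') j)
          * ∑ b : Idx, η b ((Fin.insertNth (α := fun _ => Idx) i x B') ∘ i.succAbove)
              * conj (η b ((Fin.insertNth (α := fun _ => Idx) i x B') ∘ j.succAbove))
        = kdelta x (B' j₀) * ∑ b : Idx, η b B' * conj (η b B') := by
      intro x B'
      have h1 : (Fin.insertNth (α := fun _ => Idx) i x B') i = x :=
        Fin.insertNth_apply_same (α := fun _ => Idx) i x B'
      have h2 : (Fin.insertNth (α := fun _ => Idx) i x B') j = B' j₀ := by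
        rw [← hj₀]
        exact Fin.insertNth_apply_succAbove (α := fun _ => Idx) i x B' j₀
      rw [h1, h2]
      refine kdelta_mul_congr (fun hxy => ?_)
      refine Finset.sum_congr rfl (fun b _ => ?_)
      have hB : (Fin.insertNth (α := fun _ => Idx) i x B') i
          = (Fin.insertNth (α := fun _ => Idx) i x B') j := by rw [h1, h2, hxy]
      rw [eta_swap (hη b) hij _ hB, comp_insertNth]
    rw [Finset.sum_congr rfl (fun x _ => Finset.sum_congr rfl (fun B' _ => hpt2 x B')),
      if_neg hij, one_mul]
    rw [Finset.sum_comm (f := fun (x : Idx) (B' : Fin (n+1) → Idx) =>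
      kdelta x (B' j₀) * ∑ b : Idx, η b B' * conj (η b B'))]
    rw [Finset.sum_comm (f := fun (b : Idx) (B' : Fin (n+1) → Idx) => η b B' * conj (η b B'))]
    refine Finset.sum_congr rfl (fun B' _ => ?_)
    rw [← Finset.sum_mul, sum_kdelta (B' j₀), one_mul]

lemma keyGH {n : ℕ} (η : Idx → (Fin (n+1) → Idx) → ℂ) (hη : ∀ b, Symm (η b))
    (htf : ∀ rest : Fin n → Idx, ∑ a : Idx, η a (Fin.cons a rest) = 0)
    (i j : Fin (n+2)) :
    (∑ a : Idx, ∑ b : Idx, ∑ B : Fin (n+2) → Idx,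
      (kdelta a (B i) * η b (B ∘ i.succAbove))
        * conj (kdelta b (B j) * η a (B ∘ j.succAbove)))
    = (if i = j then 1 else 0)
        * (∑ b : Idx, ∑ B' : Fin (n+1) → Idx, η b B' * conj (η b B')) := by
  have hpt : ∀ (a b : Idx) (B : Fin (n+2) → Idx),
      (kdelta a (B i) * η b (B ∘ i.succAbove))
        * conj (kdelta b (B j) * η a (B ∘ j.succAbove))
      = kdelta a (B i) * (kdelta b (B j)
          * (η b (B ∘ i.succAbove) * conj (η a (B ∘ j.succAbove)))) := by
    intro a b B; rw [map_mul, kdelta_conj]; ring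
  rw [Finset.sum_congr rfl (fun a _ => Finset.sum_congr rfl (fun b _ =>
    Finset.sum_congr rfl (fun B _ => hpt a b B))), sum_swap3]
  have hper : ∀ B : Fin (n+2) → Idx,
      (∑ a : Idx, ∑ b : Idx, kdelta a (B i) * (kdelta b (B j)
          * (η b (B ∘ i.succAbove) * conj (η a (B ∘ j.succAbove)))))
      = η (B j) (B ∘ i.succAbove) * conj (η (B i) (B ∘ j.succAbove)) :=
    fun B => sum_kdelta2 (B i) (B j)
      (fun a b => η b (B ∘ i.succAbove) * conj (η a (B ∘ j.succAbove)))
  rw [Finset.sum_congr rfl (fun B _ => hper B), sum_insertNth i]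
  rcases eq_or_ne i j with rfl | hij
  · have hpt2 : ∀ (x : Idx) (B' : Fin (n+1) → Idx),
        η ((Fin.insertNth (α := fun _ => Idx) i x B') i)
            ((Fin.insertNth (α := fun _ => Idx) i x B') ∘ i.succAbove)
          * conj (η ((Fin.insertNth (α := fun _ => Idx) i x B') i)
              ((Fin.insertNth (α := fun _ => Idx) i x B') ∘ i.succAbove))
        = η x B' * conj (η x B') := by
      intro x B'
      rw [Fin.insertNth_apply_same (α := fun _ => Idx), comp_insertNth]
    rw [Finset.sum_congr rfl (fun x _ => Finset.sum_congr rfl (fun B' _ => hpt2 x B')),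
      if_pos rfl, one_mul]
  · obtain ⟨j₀, hj₀⟩ := Fin.exists_succAbove_eq (Ne.symm hij)
    rw [if_neg hij, zero_mul]
    have hpt2 : ∀ (x : Idx) (B' : Fin (n+1) → Idx),
        η ((Fin.insertNth (α := fun _ => Idx) i x B') j)
            ((Fin.insertNth (α := fun _ => Idx) i x B') ∘ i.succAbove)
          * conj (η ((Fin.insertNth (α := fun _ => Idx) i x B') i)
              ((Fin.insertNth (α := fun _ => Idx) i x B') ∘ j.succAbove))
        = η (B' j₀) (Fin.cons (B' j₀) (B' ∘ j₀.succAbove))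
            * conj (η x (Fin.cons x (B' ∘ j₀.succAbove))) := by
      intro x B'
      have h1 : (Fin.insertNth (α := fun _ => Idx) i x B') i = x :=
        Fin.insertNth_apply_same (α := fun _ => Idx) i x B'
      have h2 : (Fin.insertNth (α := fun _ => Idx) i x B') j = B' j₀ := by
        rw [← hj₀]
        exact Fin.insertNth_apply_succAbove (α := fun _ => Idx) i x B' j₀
      rw [h1, h2, comp_insertNth]
      rw [← eta_pull (hη (B' j₀)) j₀ B']
      have h3 : η x ((Fin.insertNth (α := fun _ => Idx) i x B') ∘ j.succAbove)
          = η x (Fin.cons x (B' ∘ j₀.succAbove)) := by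
        rw [← hj₀]
        exact eta_remove (hη x) i j₀ x B'
      rw [h3]
    rw [Finset.sum_congr rfl (fun x _ => Finset.sum_congr rfl (fun B' _ => hpt2 x B'))]
    have hinner : ∀ x : Idx,
        (∑ B' : Fin (n+1) → Idx, η (B' j₀) (Fin.cons (B' j₀) (B' ∘ j₀.succAbove))
            * conj (η x (Fin.cons x (B' ∘ j₀.succAbove)))) = 0 := by
      intro x
      rw [sum_insertNth j₀]
      have hpt3 : ∀ (y : Idx) (rest : Fin n → Idx),
          η ((Fin.insertNth (α := fun _ => Idx) j₀ y rest) j₀)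
              (Fin.cons ((Fin.insertNth (α := fun _ => Idx) j₀ y rest) j₀)
                ((Fin.insertNth (α := fun _ => Idx) j₀ y rest) ∘ j₀.succAbove))
            * conj (η x (Fin.cons x
                ((Fin.insertNth (α := fun _ => Idx) j₀ y rest) ∘ j₀.succAbove)))
          = η y (Fin.cons y rest) * conj (η x (Fin.cons x rest)) := by
        intro y rest
        rw [Fin.insertNth_apply_same (α := fun _ => Idx), comp_insertNth]
      rw [Finset.sum_congr rfl (fun y _ => Finset.sum_congr rfl (fun rest _ => hpt3 y rest))]
      rw [Finset.sum_comm]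
      refine Finset.sum_eq_zero (fun rest _ => ?_)
      rw [← Finset.sum_mul, htf rest, zero_mul]
    rw [Finset.sum_congr rfl (fun x _ => hinner x), Finset.sum_const, smul_zero]

lemma sum2_addsub {α β : Type*} [Fintype α] [Fintype β] (p q r s : α → β → ℂ) :
    ∑ a, ∑ b, ((p a b + q a b) - (r a b + s a b))
      = ((∑ a, ∑ b, p a b) + (∑ a, ∑ b, q a b))
        - ((∑ a, ∑ b, r a b) + (∑ a, ∑ b, s a b)) := by
  rw [← Finset.sum_add_distrib, ← Finset.sum_add_distrib, ← Finset.sum_sub_distrib]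
  refine Finset.sum_congr rfl (fun a _ => ?_)
  rw [← Finset.sum_add_distrib, ← Finset.sum_add_distrib, ← Finset.sum_sub_distrib]

/-! ### Part 2 -/

lemma part2 (k m : ℕ) (hk : k = m + 4) (ξ : Tens 2 (m+2)) (hξ : IsMixed ξ) :
    tnormSq (P2 k ξ) = (2 * ((k : ℝ) - 2) / (k : ℝ)) * tnormSq (contr ξ) := by
  obtain ⟨hAs, hSs⟩ := hξ
  set η : Idx → (Fin (m+1) → Idx) → ℂ := fun b B => contr ξ ![b] B with hηdef
  have hη : ∀ b, Symm (η b) := fun b => symm_contr hSs ![b]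
  have htf : ∀ rest : Fin m → Idx, ∑ a : Idx, η a (Fin.cons a rest) = 0 :=
    fun rest => tracefree hAs hSs rest
  set c : ℂ := 2 * ((k:ℂ) - 2) / (k:ℂ) with hcdef
  set t : ℂ := ((m+1 : ℕ) : ℂ) + 1 with htdef
  set N : ℂ := ∑ b : Idx, ∑ B' : Fin (m+1) → Idx, η b B' * conj (η b B') with hNdef
  -- closed form for P2
  have hform : ∀ (A : Fin 2 → Idx) (B : Fin (m+2) → Idx),
      P2 k ξ A B = (c * (2⁻¹ * t⁻¹)) *
        ((∑ i : Fin (m+2), kdelta (A 0) (B i) * η (A 1) (B ∘ i.succAbove))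
          - (∑ i : Fin (m+2), kdelta (A 1) (B i) * η (A 0) (B ∘ i.succAbove))) := by
    intro A B
    show c * antisymmetrize
        (fun A' => symmetrize (fun B' => kdelta (A' 0) (B' 0) * η (A' 1) (Fin.tail B')) B) A
      = _
    rw [antisymmetrize_two
      (fun A' => symmetrize (fun B' => kdelta (A' 0) (B' 0) * η (A' 1) (Fin.tail B')) B) A]
    show c * ((2:ℂ)⁻¹ *
        (symmetrize (fun B' => kdelta (A 0) (B' 0) * η (A 1) (Fin.tail B')) B
          - symmetrize (fun B' =>
              kdelta ((A ∘ ⇑(Equiv.swap (0:Fin 2) 1)) 0) (B' 0)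
                * η ((A ∘ ⇑(Equiv.swap (0:Fin 2) 1)) 1) (Fin.tail B')) B)) = _
    have ha0 : (A ∘ ⇑(Equiv.swap (0:Fin 2) 1)) 0 = A 1 := by
      simp [Equiv.swap_apply_left]
    have ha1 : (A ∘ ⇑(Equiv.swap (0:Fin 2) 1)) 1 = A 0 := by
      simp [Equiv.swap_apply_right]
    simp only [ha0, ha1]
    rw [symmetrize_delta (hη (A 1)) (A 0) B, symmetrize_delta (hη (A 0)) (A 1) B, ← htdef]
    ring
  -- the four K sums
  have hKxx : ∀ i j : Fin (m+2),
      (∑ A : Fin 2 → Idx, ∑ B : Fin (m+2) → Idx,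
        (kdelta (A 0) (B i) * η (A 1) (B ∘ i.succAbove))
          * conj (kdelta (A 0) (B j) * η (A 1) (B ∘ j.succAbove)))
      = (if i = j then 4 else 1) * N := by
    intro i j
    rw [sum_fun2 (fun a b => ∑ B : Fin (m+2) → Idx,
      (kdelta a (B i) * η b (B ∘ i.succAbove))
        * conj (kdelta a (B j) * η b (B ∘ j.succAbove)))]
    exact keyGG η hη i j
  have hKyy : ∀ i j : Fin (m+2),
      (∑ A : Fin 2 → Idx, ∑ B : Fin (m+2) → Idx,
        (kdelta (A 1) (B i) * η (A 0) (B ∘ i.succAbove))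
          * conj (kdelta (A 1) (B j) * η (A 0) (B ∘ j.succAbove)))
      = (if i = j then 4 else 1) * N := by
    intro i j
    rw [sum_fun2 (fun a b => ∑ B : Fin (m+2) → Idx,
      (kdelta b (B i) * η a (B ∘ i.succAbove))
        * conj (kdelta b (B j) * η a (B ∘ j.succAbove)))]
    rw [Finset.sum_comm]
    exact keyGG η hη i j
  have hKxy : ∀ i j : Fin (m+2),
      (∑ A : Fin 2 → Idx, ∑ B : Fin (m+2) → Idx,
        (kdelta (A 0) (B i) * η (A 1) (B ∘ i.succAbove))
          * conj (kdelta (A 1) (B j) * η (A 0) (B ∘ j.succAbove)))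
      = (if i = j then 1 else 0) * N := by
    intro i j
    rw [sum_fun2 (fun a b => ∑ B : Fin (m+2) → Idx,
      (kdelta a (B i) * η b (B ∘ i.succAbove))
        * conj (kdelta b (B j) * η a (B ∘ j.succAbove)))]
    exact keyGH η hη htf i j
  have hKyx : ∀ i j : Fin (m+2),
      (∑ A : Fin 2 → Idx, ∑ B : Fin (m+2) → Idx,
        (kdelta (A 1) (B i) * η (A 0) (B ∘ i.succAbove))
          * conj (kdelta (A 0) (B j) * η (A 1) (B ∘ j.succAbove)))
      = (if i = j then 1 else 0) * N := by
    intro i j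
    rw [sum_fun2 (fun a b => ∑ B : Fin (m+2) → Idx,
      (kdelta b (B i) * η a (B ∘ i.succAbove))
        * conj (kdelta a (B j) * η b (B ∘ j.succAbove)))]
    rw [Finset.sum_comm]
    exact keyGH η hη htf i j
  -- expansion of the square
  have expand : ∀ (A : Fin 2 → Idx) (B : Fin (m+2) → Idx),
      P2 k ξ A B * conj (P2 k ξ A B)
        = (c * (2⁻¹ * t⁻¹)) * conj (c * (2⁻¹ * t⁻¹))
            * ∑ i : Fin (m+2), ∑ j : Fin (m+2),
              (((kdelta (A 0) (B i) * η (A 1) (B ∘ i.succAbove))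
                  * conj (kdelta (A 0) (B j) * η (A 1) (B ∘ j.succAbove))
                + (kdelta (A 1) (B i) * η (A 0) (B ∘ i.succAbove))
                  * conj (kdelta (A 1) (B j) * η (A 0) (B ∘ j.succAbove)))
               - ((kdelta (A 0) (B i) * η (A 1) (B ∘ i.succAbove))
                  * conj (kdelta (A 1) (B j) * η (A 0) (B ∘ j.succAbove))
                + (kdelta (A 1) (B i) * η (A 0) (B ∘ i.succAbove))
                  * conj (kdelta (A 0) (B j) * η (A 1) (B ∘ j.succAbove)))) := by
    intro A B
    rw [hform A B, map_mul, map_sub, map_sum, map_sum]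
    rw [show ∀ (K K' S S' : ℂ), (K * S) * (K' * S') = (K * K') * (S * S') from
      fun K K' S S' => by ring]
    rw [sum_sub_mul_sub]
  -- the full complex identity
  have HC : (∑ A : Fin 2 → Idx, ∑ B : Fin (m+2) → Idx, P2 k ξ A B * conj (P2 k ξ A B))
      = (c * (2⁻¹ * t⁻¹)) * conj (c * (2⁻¹ * t⁻¹))
          * ((((m+2 : ℕ) : ℂ) * (((m+2 : ℕ) : ℂ) - 1) * 2 + ((m+2 : ℕ) : ℂ) * 6) * N) := by
    rw [Finset.sum_congr rfl (fun A _ => Finset.sum_congr rfl (fun B _ => expand A B))]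
    have pull : ∀ (d : ℂ) (F : (Fin 2 → Idx) → (Fin (m+2) → Idx) → ℂ),
        (∑ A : Fin 2 → Idx, ∑ B : Fin (m+2) → Idx, d * F A B)
          = d * ∑ A : Fin 2 → Idx, ∑ B : Fin (m+2) → Idx, F A B := by
      intro d F
      rw [Finset.mul_sum]
      exact Finset.sum_congr rfl (fun A _ => (Finset.mul_sum _ _ _).symm)
    rw [pull, sum_swap4]
    congr 1
    have hij : ∀ i j : Fin (m+2),
        (∑ A : Fin 2 → Idx, ∑ B : Fin (m+2) → Idx,
          (((kdelta (A 0) (B i) * η (A 1) (B ∘ i.succAbove))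
              * conj (kdelta (A 0) (B j) * η (A 1) (B ∘ j.succAbove))
            + (kdelta (A 1) (B i) * η (A 0) (B ∘ i.succAbove))
              * conj (kdelta (A 1) (B j) * η (A 0) (B ∘ j.succAbove)))
           - ((kdelta (A 0) (B i) * η (A 1) (B ∘ i.succAbove))
              * conj (kdelta (A 1) (B j) * η (A 0) (B ∘ j.succAbove))
            + (kdelta (A 1) (B i) * η (A 0) (B ∘ i.succAbove))
              * conj (kdelta (A 0) (B j) * η (A 1) (B ∘ j.succAbove)))))
        = (if i = j then (6:ℂ) else 2) * N := by
      intro i j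
      rw [sum2_addsub, hKxx i j, hKyy i j, hKxy i j, hKyx i j]
      by_cases h : i = j
      · simp only [if_pos h]; ring
      · simp only [if_neg h]; ring
    rw [Finset.sum_congr rfl (fun i _ => Finset.sum_congr rfl (fun j _ => hij i j)),
      Finset.sum_congr rfl (fun i (_ : i ∈ Finset.univ) => (Finset.sum_mul _ _ _).symm),
      ← Finset.sum_mul, sum_ite4]
  -- conversion to reals
  have hNr : ((tnormSq (contr ξ) : ℝ) : ℂ) = N := by
    rw [tnormSq_eq]
    have hA1 : ∀ (A : Fin 1 → Idx) (B : Fin (m+1) → Idx),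
        contr ξ A B * conj (contr ξ A B) = η (A 0) B * conj (η (A 0) B) := by
      intro A B
      have h : A = ![A 0] := funext fun i => by fin_cases i; rfl
      have h2 : contr ξ A B = η (A 0) B := by
        rw [hηdef]
        show contr ξ A B = contr ξ ![A 0] B
        rw [← h]
      rw [h2]
    rw [Finset.sum_congr rfl (fun A _ => Finset.sum_congr rfl (fun B _ => hA1 A B))]
    exact sum_fun1 (fun a => ∑ B : Fin (m+1) → Idx, η a B * conj (η a B))
  have hPr : ((tnormSq (P2 k ξ) : ℝ) : ℂ)
      = (∑ A, ∑ B, P2 k ξ A B * conj (P2 k ξ A B)) := tnormSq_eq _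
  have hconj : conj c = c := by
    simp [hcdef, map_div₀, map_mul, map_sub, Complex.conj_natCast, Complex.conj_ofNat]
  have harith : (c * (2⁻¹ * t⁻¹)) * conj (c * (2⁻¹ * t⁻¹))
      * ((((m+2 : ℕ) : ℂ) * (((m+2 : ℕ) : ℂ) - 1) * 2 + ((m+2 : ℕ) : ℂ) * 6))
      = (((2 * ((k : ℝ) - 2) / (k : ℝ)) : ℝ) : ℂ) := by
    rw [map_mul, hconj, map_mul, map_inv₀, map_inv₀, htdef, hcdef]
    have hconjt : conj (((m+1 : ℕ) : ℂ) + 1) = ((m+1 : ℕ) : ℂ) + 1 := by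
      rw [map_add, map_one, Complex.conj_natCast]
    have hconj2 : conj (2 : ℂ) = 2 := by
      rw [Complex.conj_ofNat]
    rw [hconjt, hconj2]
    subst hk
    push_cast
    have h2 : ((m:ℂ)+2) ≠ 0 := by
      intro h
      have := congrArg Complex.re h
      simp at this
      linarith [this]
    have h4 : ((m:ℂ)+4) ≠ 0 := by
      intro h
      have := congrArg Complex.re h
      simp at this
      linarith [this]
    have h2' : ((m:ℂ)+1+1) ≠ 0 := by
      rw [show ((m:ℂ)+1+1) = (m:ℂ)+2 from by ring]; exact h2
    field_simp
    ring
  have final : ((tnormSq (P2 k ξ) : ℝ) : ℂ)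
      = (((2 * ((k : ℝ) - 2) / (k : ℝ)) * tnormSq (contr ξ) : ℝ) : ℂ) := by
    rw [hPr, HC, ← mul_assoc, harith]
    push_cast
    rw [hNr]
  exact_mod_cast final
/-- For `k = m + 4 ≥ 4`:
`‖𝒫₁(ξ)‖² = ((k−1)/(k+2)) ‖𝒞(ξ)‖²` for `ξ ∈ V₁`, and
`‖𝒫₂(ξ)‖² = (2(k−2)/k) ‖𝒞(ξ)‖²` for `ξ ∈ V₂`. -/
theorem P_norm_identity (k m : ℕ) (hk : k = m + 4) :
    (∀ ξ : Tens 1 (m+3), IsMixed ξ →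
      tnormSq (P1 k ξ) = (((k : ℝ) - 1) / ((k : ℝ) + 2)) * tnormSq (contr ξ)) ∧
    (∀ ξ : Tens 2 (m+2), IsMixed ξ →
      tnormSq (P2 k ξ) = (2 * ((k : ℝ) - 2) / (k : ℝ)) * tnormSq (contr ξ)) := by
  exact ⟨fun ξ hξ => part1 k m hk ξ hξ, fun ξ hξ => part2 k m hk ξ hξ⟩
end
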